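/- Consider the 2-state MDP with states {1,2}: state 2 is absorbing with reward 1/2; from state 1, action 'down' moves deterministically to state 2 with reward 1/2, while action 'up' gives reward 1 and moves back to state 1 with probability 1−1/T and to state 2 with probability 1/T (T ≥ 1). Then every stationary policy has gain (1/2)·1; the policy π_down has bias h^{π_down} = 0 so span(h^{π_down}) = 0; the policy π_up has bias h^{π_up}(1) = T/2, h^{π_up}(2) = 0, so span(h^{π_up}) = T/2; and π_up is the Blackwell-optimal policy, so span(h^⋆) = T/2 while inf over gain-optimal π of span(h^π) equals 0. -/

import Mathlib

open Matrix

/-- The span seminorm on ℝ^{Fin 2}. -/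
noncomputable def spanSem (x : Fin 2 → ℝ) : ℝ := (⨆ s, x s) - ⨅ s, x s

/-- Transition matrix of the stationary policy taking action 'up' at state 1 with
probability p (and 'down' with probability 1−p); state 2 (index 1) is absorbing.
'up' returns to state 1 with probability 1−1/T and moves to state 2 with
probability 1/T; 'down' moves to state 2. -/
noncomputable def Ppol (T p : ℝ) : Matrix (Fin 2) (Fin 2) ℝ :=
  !![p * (1 - 1 / T), p * (1 / T) + (1 - p); 0, 1]

/-- Reward vector of the mixed policy: 'up' gives reward 1, 'down' gives 1/2,
and state 2 gives reward 1/2. -/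
noncomputable def rpol (p : ℝ) : Fin 2 → ℝ := ![p * 1 + (1 - p) * (1 / 2), 1 / 2]

/-- The Cesaro limiting matrix: all mass ends in the absorbing state 2. -/
def PinfEx : Matrix (Fin 2) (Fin 2) ℝ := !![0, 1; 0, 1]

/-!
Let c = p(1 - 1/T) < 1 be the probability of staying in state 1. State 2 decouples from the
evaluation equations: P^∞ h = 0 forces h(2) = 0, hence ρ(2) = 1/2, and the rows of state 1 read
(1 - c)(ρ(1) - ρ(2)) = 0 and (1 - c) h(1) = p/2. So every policy has gain 1/2 and bias
(p / (2(1 - c)), 0), which is 0 for p = 0 and (T/2, 0) for p = 1. In the same way the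
γ-discounted value is 1/(2(1 - γ)) + (p / (2(1 - γc)), 0), and p / (1 - γc) is increasing in p,
so π_up is optimal for every discount factor.
-/

theorem ciSup_fin_two {α : Type*} [ConditionallyCompleteLattice α] (x : Fin 2 → α) :
    ⨆ i, x i = x 0 ⊔ x 1 :=
  le_antisymm (ciSup_le (Fin.forall_fin_two.2 ⟨le_sup_left, le_sup_right⟩))
    (sup_le (le_ciSup (Set.finite_range x).bddAbove 0) (le_ciSup (Set.finite_range x).bddAbove 1))

theorem ciInf_fin_two {α : Type*} [ConditionallyCompleteLattice α] (x : Fin 2 → α) :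
    ⨅ i, x i = x 0 ⊓ x 1 :=
  ciSup_fin_two (α := αᵒᵈ) x

theorem spanSem_eq_abs (x : Fin 2 → ℝ) : spanSem x = |x 0 - x 1| := by
  rw [spanSem, ciSup_fin_two, ciInf_fin_two, max_sub_min_eq_abs']

theorem spanSem_nonneg (x : Fin 2 → ℝ) : 0 ≤ spanSem x :=
  spanSem_eq_abs x ▸ abs_nonneg _

theorem Ppol_mulVec (T p : ℝ) (v : Fin 2 → ℝ) :
    Ppol T p *ᵥ v = ![p * (1 - 1 / T) * v 0 + (1 - p * (1 - 1 / T)) * v 1, v 1] := by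
  rw [Ppol, mulVec_fin_two]
  simp only [of_apply, cons_val', cons_val_zero, cons_val_one, empty_val', cons_val_fin_one]
  congr 2 <;> ring

theorem PinfEx_mulVec (v : Fin 2 → ℝ) : PinfEx *ᵥ v = ![v 1, v 1] := by
  rw [PinfEx, mulVec_fin_two]
  simp only [of_apply, cons_val', cons_val_zero, cons_val_one, empty_val', cons_val_fin_one]
  congr 2 <;> ring

theorem one_sub_one_div_mem_Ico {T : ℝ} (hT : 1 ≤ T) : 1 - 1 / T ∈ Set.Ico (0 : ℝ) 1 :=
  ⟨sub_nonneg.2 (div_le_one_of_le₀ hT (by linarith)), sub_lt_self 1 (by positivity)⟩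

theorem mul_one_sub_one_div_lt_one {T p : ℝ} (hT : 1 ≤ T) (hp : p ≤ 1) : p * (1 - 1 / T) < 1 := by
  obtain ⟨hc0, hc1⟩ := one_sub_one_div_mem_Ico hT
  nlinarith

theorem gain_bias_eq {T p : ℝ} (hT : 1 ≤ T) (hp : p ≤ 1) {ρ h : Fin 2 → ℝ}
    (hρ : Ppol T p *ᵥ ρ = ρ) (hh : ρ + h = rpol p + Ppol T p *ᵥ h) (hlim : PinfEx *ᵥ h = 0) :
    ρ = (fun _ => 1 / 2) ∧ h = ![p / (2 * (1 - p * (1 - 1 / T))), 0] := by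
  set c := p * (1 - 1 / T)
  have hc : 1 - c ≠ 0 := (sub_pos.2 (mul_one_sub_one_div_lt_one hT hp)).ne'
  have hρ0 := congrFun hρ 0
  have hh0 := congrFun hh 0
  have hh1 := congrFun hh 1
  have hlim0 := congrFun hlim 0
  simp only [Ppol_mulVec, PinfEx_mulVec, rpol, Pi.add_apply, cons_val_zero, cons_val_one,
    Pi.zero_apply] at hρ0 hh0 hh1 hlim0
  have ρ1 : ρ 1 = 1 / 2 := by linarith
  have ρ0 : ρ 0 = 1 / 2 := by
    have : (1 - c) * ρ 0 = (1 - c) * ρ 1 := by linear_combination -hρ0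
    linarith [mul_left_cancel₀ hc this]
  have h0 : h 0 = p / (2 * (1 - c)) := by
    rw [eq_div_iff (mul_ne_zero two_ne_zero hc)]
    linear_combination 2 * hh0 - 2 * ρ0 + 2 * (1 - c) * hlim0
  constructor
  · ext i; fin_cases i <;> assumption
  · ext i; fin_cases i <;> simpa

theorem one_sub_smul_Ppol (T p γ : ℝ) :
    1 - γ • Ppol T p = !![1 - γ * (p * (1 - 1 / T)), -(γ * (p * (1 / T) + (1 - p))); 0, 1 - γ] := by
  ext i j; fin_cases i <;> fin_cases j <;> simp [Ppol]

noncomputable def discountedValue (T p γ : ℝ) : Fin 2 → ℝ := (1 - γ • Ppol T p)⁻¹ *ᵥ rpol p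

theorem discountedValue_eq {T p γ : ℝ} (hT : 1 ≤ T) (hp : p ≤ 1) (hγ0 : 0 ≤ γ) (hγ1 : γ < 1) :
    discountedValue T p γ =
      ![1 / (2 * (1 - γ)) + p / (2 * (1 - γ * (p * (1 - 1 / T)))), 1 / (2 * (1 - γ))] := by
  rw [discountedValue, one_sub_smul_Ppol, show p * (1 / T) + (1 - p) = 1 - p * (1 - 1 / T) by ring]
  have hc := mul_one_sub_one_div_lt_one hT hp
  generalize p * (1 - 1 / T) = c at hc ⊢
  have hγc : 1 - γ * c ≠ 0 := by nlinarith
  have hγ : 1 - γ ≠ 0 := by linarith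
  have hdet : IsUnit (!![1 - γ * c, -(γ * (1 - c)); 0, 1 - γ]).det := by
    simpa [det_fin_two_of] using mul_ne_zero hγc hγ
  let := invertibleOfIsUnitDet _ hdet
  refine inv_mulVec_eq_vec ?_
  rw [mulVec_fin_two]
  refine funext (Fin.forall_fin_two.2 ⟨?_, ?_⟩) <;>
    simp only [rpol, of_apply, cons_val', cons_val_zero, cons_val_one, cons_val_fin_one] <;>
    field_simp <;> ring

theorem div_one_sub_mul_le_one_div_one_sub {p a : ℝ} (hp : p ≤ 1) (ha0 : 0 ≤ a) (ha1 : a < 1) :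
    p / (1 - p * a) ≤ 1 / (1 - a) := by
  have hpa : 0 < 1 - p * a := by nlinarith
  rw [div_le_div_iff₀ hpa (by linarith)]
  nlinarith

theorem discountedValue_le_discountedValue_one {T p γ : ℝ} (hT : 1 ≤ T) (hp : p ≤ 1)
    (hγ0 : 0 ≤ γ) (hγ1 : γ < 1) : discountedValue T p γ ≤ discountedValue T 1 γ := by
  rw [discountedValue_eq hT hp hγ0 hγ1, discountedValue_eq hT le_rfl hγ0 hγ1]
  obtain ⟨hc0, hc1⟩ := one_sub_one_div_mem_Ico hT
  have key := div_one_sub_mul_le_one_div_one_sub hp (mul_nonneg hγ0 hc0) (by nlinarith)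
  refine Fin.forall_fin_two.2 ⟨?_, le_rfl⟩
  have : p / (1 - γ * (p * (1 - 1 / T))) ≤ 1 / (1 - γ * (1 * (1 - 1 / T))) := by
    simpa only [one_mul, mul_left_comm γ p] using key
  simp only [cons_val_zero, div_mul_eq_div_div_swap]
  gcongr

/-- In the 2-state MDP of Figure 1: every stationary policy has gain (1/2)·1;
π_down has bias 0 (span 0); π_up has bias (T/2, 0) (span T/2); π_up is
Blackwell-optimal (so span(h⋆) = T/2); and the infimum of bias spans over
gain-optimal policies equals 0.  Gain and bias are characterized by
P_π ρ = ρ, ρ + h = r_π + P_π h and P_π^∞ h = 0. -/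
theorem stmt18 (T : ℝ) (hT : 1 ≤ T) :
    -- every stationary policy has gain (1/2)·1
    (∀ p ∈ Set.Icc (0 : ℝ) 1, ∀ ρ h : Fin 2 → ℝ,
      Ppol T p *ᵥ ρ = ρ → ρ + h = rpol p + Ppol T p *ᵥ h → PinfEx *ᵥ h = 0 →
      ρ = fun _ => (1 / 2 : ℝ)) ∧
    -- the bias of π_down (p = 0) vanishes
    (∀ ρ h : Fin 2 → ℝ,
      Ppol T 0 *ᵥ ρ = ρ → ρ + h = rpol 0 + Ppol T 0 *ᵥ h → PinfEx *ᵥ h = 0 →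
      h = 0 ∧ spanSem h = 0) ∧
    -- the bias of π_up (p = 1) is (T/2, 0)
    (∀ ρ h : Fin 2 → ℝ,
      Ppol T 1 *ᵥ ρ = ρ → ρ + h = rpol 1 + Ppol T 1 *ᵥ h → PinfEx *ᵥ h = 0 →
      h = ![T / 2, 0] ∧ spanSem h = T / 2) ∧
    -- π_up is Blackwell-optimal
    (∃ γ0 ∈ Set.Ico (0 : ℝ) 1, ∀ γ ∈ Set.Ico γ0 1, ∀ p ∈ Set.Icc (0 : ℝ) 1,
      ((1 : Matrix (Fin 2) (Fin 2) ℝ) - γ • Ppol T p)⁻¹ *ᵥ rpol p ≤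
        ((1 : Matrix (Fin 2) (Fin 2) ℝ) - γ • Ppol T 1)⁻¹ *ᵥ rpol 1) ∧
    -- inf over gain-optimal policies of the bias span equals 0
    IsLeast {v : ℝ | ∃ p ∈ Set.Icc (0 : ℝ) 1, ∃ ρ h : Fin 2 → ℝ,
      Ppol T p *ᵥ ρ = ρ ∧ ρ + h = rpol p + Ppol T p *ᵥ h ∧ PinfEx *ᵥ h = 0 ∧
      ρ = (fun _ => (1 / 2 : ℝ)) ∧ v = spanSem h} 0 := by
  refine ⟨fun p hp ρ h hρ hh hlim => (gain_bias_eq hT hp.2 hρ hh hlim).1, ?_, ?_,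
    ⟨0, ⟨le_rfl, one_pos⟩, fun γ hγ p hp => discountedValue_le_discountedValue_one hT hp.2 hγ.1 hγ.2⟩,
    ?_⟩
  · intro ρ h hρ hh hlim
    have h0 : h = 0 := by
      rw [(gain_bias_eq hT zero_le_one hρ hh hlim).2]
      ext i; fin_cases i <;> simp
    simp [h0, spanSem_eq_abs]
  · intro ρ h hρ hh hlim
    have hT2 : 1 / (2 * (1 - 1 * (1 - 1 / T))) = T / 2 := by
      field_simp
      ring
    have hup : h = ![T / 2, 0] := by rw [(gain_bias_eq hT le_rfl hρ hh hlim).2, hT2]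
    refine ⟨hup, ?_⟩
    rw [hup, spanSem_eq_abs]
    simpa using abs_of_nonneg (by linarith : 0 ≤ T / 2)
  · refine ⟨⟨0, ⟨le_rfl, zero_le_one⟩, fun _ => 1 / 2, 0, ?_, ?_, by simp, rfl, ?_⟩,
      fun v ⟨_, _, _, h, _, _, _, _, hv⟩ => hv ▸ spanSem_nonneg h⟩
    · rw [Ppol_mulVec]; ext i; fin_cases i <;> simp
    · rw [Ppol_mulVec]; ext i; fin_cases i <;> simp [rpol]
    · simp [spanSem_eq_abs]
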